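/- Let G be a simple graph with maximum degree at most 3, and let F(G) be the associated set of flows in the Clos network C_{3, 3n+m}. For every routing of F(G) with congestion at most 1: (P1) for every edge e of G, the two incident flows entering e's edge block are assigned the same middle switch; and (P2) for every vertex v of G, the incident flows leaving v's vertex block are assigned pairwise distinct middle switches. -/
import Mathlib


open Finset

/-- Congestion of a routing `r` of a finite family of flows in the Clos network
`C_{N,R}`. -/
noncomputable def congestion {F : Type*} [Fintype F] {N R : ℕ}
    (inp out : F → Fin R) (dem : F → ℝ) (r : F → Fin N) : ℝ :=
  ⨆ p : Fin R × Fin N,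
    max (∑ f ∈ Finset.univ.filter (fun f => inp f = p.1 ∧ r f = p.2), dem f)
        (∑ f ∈ Finset.univ.filter (fun f => out f = p.1 ∧ r f = p.2), dem f)

/-- The flows `F(G)` of the reduction from a graph with `n` vertices and `m` edges:
`vert k i j` are the cross-gadget (vertex) flows of the `k`-th vertex block,
`edg e b` the two edge flows of the `e`-th edge block, and `inc e b` the two
incident flows of edge `e` (`b = false` for the endpoint `u e`, `b = true` for
`v e`). -/
inductive RFlow (n m : ℕ) where
  | vert (k : Fin n) (i : Fin 3) (j : Fin 2)
  | edg (e : Fin m) (b : Fin 2)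
  | inc (e : Fin m) (b : Bool)
  deriving DecidableEq, Fintype

/-- The endpoint of edge `e` selected by `b`. -/
def ept {n m : ℕ} (u v : Fin m → Fin n) (e : Fin m) (b : Bool) : Fin n :=
  if b then v e else u e

/-- Input switch (0-based) of each flow of `F(G)` in `C_{3, 3n+m}`. -/
def rInp {n m : ℕ} (u v : Fin m → Fin n) (rk : Fin m → Fin n → Fin 3) :
    RFlow n m → Fin (3 * n + m)
  | .vert k i _ => ⟨3 * k.1 + i.1, by have := k.2; have := i.2; omega⟩
  | .edg e _ => ⟨3 * n + e.1, by have := e.2; omega⟩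
  | .inc e b =>
      ⟨3 * (ept u v e b).1 + (rk e (ept u v e b)).1,
        by have := (ept u v e b).2; have := (rk e (ept u v e b)).2; omega⟩

/-- Output switch (0-based) of each flow of `F(G)`. -/
def rOut {n m : ℕ} : RFlow n m → Fin (3 * n + m)
  | .vert k _ j => ⟨3 * k.1 + j.1, by have := k.2; have := j.2; omega⟩
  | .edg e _ => ⟨3 * n + e.1, by have := e.2; omega⟩
  | .inc e _ => ⟨3 * n + e.1, by have := e.2; omega⟩

/-- Source index (0-based) of each flow of `F(G)`. -/
def rSrc {n m : ℕ} : RFlow n m → Fin 3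
  | .vert _ _ j => ⟨j.1, by have := j.2; omega⟩
  | .edg _ b => ⟨b.1, by have := b.2; omega⟩
  | .inc _ _ => 2

/-- Destination index (0-based) of each flow of `F(G)`. -/
def rDst {n m : ℕ} : RFlow n m → Fin 3
  | .vert _ i _ => i
  | .edg _ b => ⟨b.1, by have := b.2; omega⟩
  | .inc _ _ => 2

/-- Demands: `1` for vertex and edge flows, `1/2` for incident flows. -/
noncomputable def rDem {n m : ℕ} : RFlow n m → ℝ
  | .vert _ _ _ => 1
  | .edg _ _ => 1
  | .inc _ _ => 1 / 2

lemma rDem_nonneg {n m : ℕ} (f : RFlow n m) : 0 ≤ rDem f := by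
  cases f <;> norm_num [rDem]

lemma load_inp_le {F : Type*} [Fintype F] {N R : ℕ}
    (inp out : F → Fin R) (dem : F → ℝ) (r : F → Fin N) (p : Fin R × Fin N) :
    (∑ f ∈ Finset.univ.filter (fun f => inp f = p.1 ∧ r f = p.2), dem f)
      ≤ congestion inp out dem r := by
  unfold congestion
  exact le_trans (le_max_left _ _) (le_ciSup (f := fun p : Fin R × Fin N =>
    max (∑ f ∈ Finset.univ.filter (fun f => inp f = p.1 ∧ r f = p.2), dem f)
        (∑ f ∈ Finset.univ.filter (fun f => out f = p.1 ∧ r f = p.2), dem f))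
    (Set.Finite.bddAbove (Set.finite_range _)) p)

lemma load_out_le {F : Type*} [Fintype F] {N R : ℕ}
    (inp out : F → Fin R) (dem : F → ℝ) (r : F → Fin N) (p : Fin R × Fin N) :
    (∑ f ∈ Finset.univ.filter (fun f => out f = p.1 ∧ r f = p.2), dem f)
      ≤ congestion inp out dem r := by
  unfold congestion
  exact le_trans (le_max_right _ _) (le_ciSup (f := fun p : Fin R × Fin N =>
    max (∑ f ∈ Finset.univ.filter (fun f => inp f = p.1 ∧ r f = p.2), dem f)
        (∑ f ∈ Finset.univ.filter (fun f => out f = p.1 ∧ r f = p.2), dem f))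
    (Set.Finite.bddAbove (Set.finite_range _)) p)

lemma two_inp {n m : ℕ} (u v : Fin m → Fin n) (rk : Fin m → Fin n → Fin 3)
    (r : RFlow n m → Fin 3)
    (hcong : congestion (rInp u v rk) rOut rDem r ≤ 1)
    {f1 f2 : RFlow n m} (h12 : f1 ≠ f2)
    (hi : rInp u v rk f1 = rInp u v rk f2) (hr : r f1 = r f2) :
    rDem f1 + rDem f2 ≤ 1 := by
  have hsub : ({f1, f2} : Finset (RFlow n m)) ⊆
      Finset.univ.filter (fun f => rInp u v rk f = rInp u v rk f1 ∧ r f = r f1) := by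
    intro f hf
    simp only [Finset.mem_insert, Finset.mem_singleton] at hf
    rcases hf with rfl | rfl <;> simp [hi.symm, hr.symm]
  have h1 := Finset.sum_le_sum_of_subset_of_nonneg hsub
    (fun f _ _ => rDem_nonneg f)
  rw [Finset.sum_pair h12] at h1
  exact le_trans h1 (le_trans (load_inp_le _ _ _ _ (rInp u v rk f1, r f1)) hcong)

lemma two_out {n m : ℕ} (u v : Fin m → Fin n) (rk : Fin m → Fin n → Fin 3)
    (r : RFlow n m → Fin 3)
    (hcong : congestion (rInp u v rk) rOut rDem r ≤ 1)
    {f1 f2 : RFlow n m} (h12 : f1 ≠ f2)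
    (ho : rOut f1 = rOut f2) (hr : r f1 = r f2) :
    rDem f1 + rDem f2 ≤ 1 := by
  have hsub : ({f1, f2} : Finset (RFlow n m)) ⊆
      Finset.univ.filter (fun f => rOut f = rOut f1 ∧ r f = r f1) := by
    intro f hf
    simp only [Finset.mem_insert, Finset.mem_singleton] at hf
    rcases hf with rfl | rfl <;> simp [ho.symm, hr.symm]
  have h1 := Finset.sum_le_sum_of_subset_of_nonneg hsub
    (fun f _ _ => rDem_nonneg f)
  rw [Finset.sum_pair h12] at h1
  exact le_trans h1 (le_trans (load_out_le _ _ _ _ (rOut f1, r f1)) hcong)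

lemma fin3_third : ∀ a b x y : Fin 3, a ≠ b → x ≠ a → x ≠ b → y ≠ a → y ≠ b →
    x = y := by decide

lemma fin3_key : ∀ f0 f1 : Fin 3 → Fin 3, Function.Injective f0 →
    Function.Injective f1 → (∀ i, f0 i ≠ f1 i) → ∀ i i' c : Fin 3, i ≠ i' →
    c ≠ f0 i → c ≠ f1 i → c ≠ f0 i' → c ≠ f1 i' → False := by decide

/-- For every routing of `F(G)` with congestion at most `1`:
(P1) the two incident flows of each edge are assigned the same middle switch, and
(P2) incident flows leaving the same vertex block are assigned pairwise distinct
middle switches. -/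
theorem reduction_routing_structure {n m : ℕ}
    (u v : Fin m → Fin n) (hne : ∀ e, u e ≠ v e)
    (hsimple : ∀ e e' : Fin m,
      (u e = u e' ∧ v e = v e') ∨ (u e = v e' ∧ v e = u e') → e = e')
    (hdeg : ∀ w : Fin n,
      (Finset.univ.filter fun e : Fin m => u e = w ∨ v e = w).card ≤ 3)
    (rk : Fin m → Fin n → Fin 3)
    (hrk : ∀ (w : Fin n) (e e' : Fin m), (u e = w ∨ v e = w) →
      (u e' = w ∨ v e' = w) → rk e w = rk e' w → e = e')
    (r : RFlow n m → Fin 3)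
    (hcong : congestion (rInp u v rk) rOut rDem r ≤ 1) :
    (∀ e : Fin m, r (.inc e false) = r (.inc e true)) ∧
    (∀ (e e' : Fin m) (b b' : Bool), ept u v e b = ept u v e' b' →
      r (.inc e b) = r (.inc e' b') → e = e' ∧ b = b') := by
  have tinp : ∀ {f1 f2 : RFlow n m}, f1 ≠ f2 → rInp u v rk f1 = rInp u v rk f2 →
      r f1 = r f2 → rDem f1 + rDem f2 ≤ 1 :=
    fun h hi hr => two_inp u v rk r hcong h hi hr
  have tout : ∀ {f1 f2 : RFlow n m}, f1 ≠ f2 → rOut f1 = rOut f2 →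
      r f1 = r f2 → rDem f1 + rDem f2 ≤ 1 :=
    fun h ho hr => two_out u v rk r hcong h ho hr
  constructor
  · intro e
    have h01 : r (.edg e 0) ≠ r (.edg e 1) := by
      intro h
      have := tinp (f1 := .edg e 0) (f2 := .edg e 1) (by simp) rfl h
      norm_num [rDem] at this
    have hic : ∀ (b : Bool) (c : Fin 2), r (.inc e b) ≠ r (.edg e c) := by
      intro b c h
      have := tout (f1 := .inc e b) (f2 := .edg e c) (by simp) rfl h
      norm_num [rDem] at this
    exact fin3_third _ _ _ _ h01 (hic false 0) (hic false 1) (hic true 0) (hic true 1)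
  · intro e e' b b' hw hr'
    set w := ept u v e b with hwdef
    have hw' : ept u v e' b' = w := hw.symm
    have hmem : ∀ (e0 : Fin m) (b0 : Bool), ept u v e0 b0 = w →
        (u e0 = w ∨ v e0 = w) := by
      intro e0 b0 h
      cases b0
      · exact Or.inl (by simpa [ept] using h)
      · exact Or.inr (by simpa [ept] using h)
    have hinp_inc : ∀ (e0 : Fin m) (b0 : Bool), ept u v e0 b0 = w → ∀ j : Fin 2,
        rInp u v rk (.inc e0 b0) = rInp u v rk (.vert w (rk e0 w) j) := by
      intro e0 b0 h j
      apply Fin.ext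
      simp [rInp, h]
    have hvout : ∀ (j : Fin 2) (i1 i2 : Fin 3), i1 ≠ i2 →
        r (.vert w i1 j) ≠ r (.vert w i2 j) := by
      intro j i1 i2 hne12 h
      have := tout (f1 := .vert w i1 j) (f2 := .vert w i2 j)
        (by simp [hne12]) rfl h
      norm_num [rDem] at this
    have hvin : ∀ i : Fin 3, r (.vert w i 0) ≠ r (.vert w i 1) := by
      intro i h
      have := tinp (f1 := .vert w i 0) (f2 := .vert w i 1) (by simp) rfl h
      norm_num [rDem] at this
    have hinc : ∀ (e0 : Fin m) (b0 : Bool), ept u v e0 b0 = w → ∀ j : Fin 2,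
        r (.inc e0 b0) ≠ r (.vert w (rk e0 w) j) := by
      intro e0 b0 h j hh
      have := tinp (f1 := .inc e0 b0) (f2 := .vert w (rk e0 w) j) (by simp)
        (hinp_inc e0 b0 h j) hh
      norm_num [rDem] at this
    have hii : rk e w = rk e' w := by
      by_contra hii
      exact fin3_key (fun i => r (.vert w i 0)) (fun i => r (.vert w i 1))
        (fun i1 i2 h => by_contra fun hne12 => hvout 0 i1 i2 hne12 h)
        (fun i1 i2 h => by_contra fun hne12 => hvout 1 i1 i2 hne12 h)
        hvin (rk e w) (rk e' w) (r (.inc e b)) hii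
        (hinc e b rfl 0) (hinc e b rfl 1)
        (by rw [hr']; exact hinc e' b' hw' 0)
        (by rw [hr']; exact hinc e' b' hw' 1)
    have he : e = e' := hrk w e e' (hmem e b rfl) (hmem e' b' hw') hii
    subst he
    refine ⟨rfl, ?_⟩
    cases b <;> cases b' <;> simp [ept] at hw ⊢
    · exact absurd hw (hne e)
    · exact absurd hw.symm (hne e)
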